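/- Fix finite sets M and 𝒩 with |M| > 1, |𝒩| > 1. For any subcollection 𝒩* ⊆ 𝒩, define g(𝒩*) = (1 + |𝒩*|/(|M||𝒩|)) / (|M| + 1 + |𝒩*|). If 𝒩₁, 𝒩₂ are two feasible set covers of M with |𝒩₁| < |𝒩₂|, then g(𝒩₁) > g(𝒩₂); consequently a minimum-size set cover maximizes g over all feasible covers. -/
import Mathlib


open Finset

lemma g_lt_aux (m k : ℝ) (hm : 2 ≤ m) (hk : 2 ≤ k) (a b : ℕ) (hab : a < b) :
    (1 + (b : ℝ) / (m * k)) / (m + 1 + b) < (1 + (a : ℝ) / (m * k)) / (m + 1 + a) := by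
  have hmk : (0:ℝ) < m * k := by nlinarith
  have hab' : (a : ℝ) < b := by exact_mod_cast hab
  have h1 : (0:ℝ) < m + 1 + b := by positivity
  have h2 : (0:ℝ) < m + 1 + a := by positivity
  rw [div_lt_div_iff₀ h1 h2]
  have key : m + 1 < m * k := by nlinarith
  have hb : (1 + (b:ℝ) / (m * k)) = (m * k + b) / (m * k) := by field_simp
  have ha : (1 + (a:ℝ) / (m * k)) = (m * k + a) / (m * k) := by field_simp
  rw [hb, ha, div_mul_eq_mul_div, div_mul_eq_mul_div, div_lt_div_iff₀ hmk hmk]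
  nlinarith [mul_pos hmk (mul_pos (sub_pos.mpr hab') (sub_pos.mpr key))]

/-- Stmt 12: g(𝒩*) = (1 + |𝒩*|/(|M||𝒩|)) / (|M| + 1 + |𝒩*|) is strictly larger for a
    smaller feasible cover, hence a minimum-size set cover maximizes g over all covers. -/
theorem stmt_12 {α : Type*} [DecidableEq α] (M : Finset α) (𝒩 : Finset (Finset α))
    (hM : 1 < M.card) (hN : 1 < 𝒩.card) :
    let g : Finset (Finset α) → ℝ := fun Ns =>
      (1 + (Ns.card : ℝ) / ((M.card : ℝ) * 𝒩.card)) / ((M.card : ℝ) + 1 + Ns.card)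
    let isCover : Finset (Finset α) → Prop := fun Ns =>
      Ns ⊆ 𝒩 ∧ ∀ m ∈ M, ∃ N ∈ Ns, m ∈ N
    (∀ N₁ N₂ : Finset (Finset α), isCover N₁ → isCover N₂ →
        N₁.card < N₂.card → g N₂ < g N₁) ∧
    (∀ N₀ : Finset (Finset α), isCover N₀ →
        (∀ N' : Finset (Finset α), isCover N' → N₀.card ≤ N'.card) →
        ∀ N' : Finset (Finset α), isCover N' → g N' ≤ g N₀) := by
  intro g isCover
  have hm : (2:ℝ) ≤ M.card := by exact_mod_cast hM
  have hk : (2:ℝ) ≤ 𝒩.card := by exact_mod_cast hN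
  have main : ∀ N₁ N₂ : Finset (Finset α), N₁.card < N₂.card → g N₂ < g N₁ := by
    intro N₁ N₂ h
    exact g_lt_aux _ _ hm hk _ _ h
  refine ⟨fun N₁ N₂ _ _ h => main _ _ h, ?_⟩
  intro N₀ h₀ hmin N' h'
  rcases lt_or_eq_of_le (hmin N' h') with h | h
  · exact le_of_lt (main _ _ h)
  · simp only [g, h]
    exact le_refl _
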